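/- Let m be a prime and G : ℕ → ZMod m periodic with minimal period p. If ∑_{k=0}^{p-1} G_k ≠ 0 in ZMod m, then the partial sum sequence SG_n = ∑_{k=0}^n G_k has minimal period m · p. -/

import Mathlib

/-!
Since `G` is `p`-periodic, summing over `a` full periods gives `a` times the period sum `σ`,
and `SG (n + m p) = SG n + m σ = SG n` in `ZMod m`. Conversely, a period `q` of `SG` is,
by differencing, a period of `G` (except possibly at index `0`, which `p`-periodicity repairs),
so `q = t p` by minimality of `p`. Then `SG q = SG 0` says that the sum over `t` periods,
`t σ`, vanishes; as `σ ≠ 0` and `m` is prime, `m ∣ t`.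
-/

open Finset Function

namespace Function.Periodic

variable {M : Type*} {f : ℕ → M} {c : ℕ}

theorem sum_range_add [AddCommMonoid M] (h : Periodic f c) (n : ℕ) :
    ∑ k ∈ range (n + c), f k = ∑ k ∈ range n, f k + ∑ k ∈ range c, f k := by
  induction n with
  | zero => simp
  | succ n ih =>
    rw [Nat.add_right_comm, sum_range_succ, ih, h, sum_range_succ, add_right_comm]

theorem sum_range_mul [AddCommMonoid M] (h : Periodic f c) (a : ℕ) :
    ∑ k ∈ range (a * c), f k = a • ∑ k ∈ range c, f k := by
  induction a with
  | zero => simp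
  | succ a ih => rw [Nat.succ_mul, h.sum_range_add, ih, succ_nsmul]

theorem periodic_of_forall_ge (h : Periodic f c) (hc : 0 < c) {q N : ℕ}
    (hq : ∀ n ≥ N, f (n + q) = f n) : Periodic f q := fun n => by
  have hNc : Periodic f (N * c) := h.nsmul N
  have hN : N ≤ n + N * c := le_add_left (Nat.le_mul_of_pos_right N hc)
  rw [← hNc (n + q), Nat.add_right_comm, hq _ hN, hNc]

theorem dvd_of_minimal (h : Periodic f c) (hc : 0 < c)
    (hmin : ∀ r, 0 < r → Periodic f r → c ≤ r) {q : ℕ} (hq : Periodic f q) : c ∣ q := by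
  have hmod : Periodic f (q % c) := fun n => by
    rw [← (h.nsmul (q / c)) (n + q % c), smul_eq_mul, add_assoc, mul_comm, Nat.mod_add_div, hq]
  by_contra hndvd
  have hpos : 0 < q % c := Nat.pos_of_ne_zero fun h0 => hndvd (Nat.dvd_of_mod_eq_zero h0)
  exact absurd (hmin _ hpos hmod) (Nat.not_le.mpr (Nat.mod_lt q hc))

end Function.Periodic

theorem apply_add_eq_of_partialSums_add_eq {M : Type*} [AddCommGroup M] {f : ℕ → M} {q : ℕ}
    (hS : ∀ n, ∑ k ∈ range (n + q + 1), f k = ∑ k ∈ range (n + 1), f k) :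
    ∀ n ≥ 1, f (n + q) = f n := by
  rintro n (hn : 1 ≤ n)
  obtain ⟨n, rfl⟩ := Nat.exists_eq_add_of_le' hn
  rw [← sum_range_succ_sub_sum f, ← sum_range_succ_sub_sum f, hS,
    Nat.add_right_comm n 1 q, hS]

theorem stmt_7 (m : ℕ) (hm : Nat.Prime m) (G : ℕ → ZMod m) (p : ℕ) (hp : 0 < p)
    (hper : ∀ n, G (n + p) = G n)
    (hmin : ∀ q, 0 < q → (∀ n, G (n + q) = G n) → p ≤ q)
    (hsum : ∑ k ∈ Finset.range p, G k ≠ 0) :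
    (∀ n, ∑ k ∈ Finset.range (n + m * p + 1), G k = ∑ k ∈ Finset.range (n + 1), G k) ∧
    (∀ q, 0 < q → (∀ n, ∑ k ∈ Finset.range (n + q + 1), G k = ∑ k ∈ Finset.range (n + 1), G k) →
      m * p ≤ q) := by
  have : Fact m.Prime := ⟨hm⟩
  have hG : Periodic G p := hper
  refine ⟨fun n => ?_, fun q hq hS => ?_⟩
  · have hmp : Periodic G (m * p) := hG.nsmul m
    rw [Nat.add_right_comm, hmp.sum_range_add, hG.sum_range_mul, nsmul_eq_mul,
      ZMod.natCast_self, zero_mul, add_zero]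
  · have hGq : Periodic G q :=
      hG.periodic_of_forall_ge hp (apply_add_eq_of_partialSums_add_eq hS)
    obtain ⟨t, rfl⟩ := hG.dvd_of_minimal hp hmin hGq
    have hsum_q : ∑ k ∈ range (p * t), G k = 0 := by
      have h0 := hS 0
      rwa [zero_add, add_comm, hGq.sum_range_add, add_eq_left] at h0
    have hmt : m ∣ t := by
      rw [mul_comm, hG.sum_range_mul, nsmul_eq_mul, mul_eq_zero, ZMod.natCast_eq_zero_iff]
        at hsum_q
      exact hsum_q.resolve_right hsum
    rw [mul_comm p]
    exact Nat.mul_le_mul_right p (Nat.le_of_dvd (Nat.pos_of_mul_pos_left hq) hmt)
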